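/- Suppose the feature matrix M (with m ≥ 2 rows) has two rows i₀ ≠ i₁ all of whose entries lie in {−1,+1} and which are entrywise complements: M_{i₁,j} = −M_{i₀,j} for all j. Then for any target loss L* and any T, if L(λ^T) ≤ L* then T ≥ inf{‖λ‖₁ : λ ∈ ℝ^N, L(λ) ≤ L*}/(2·ln m); i.e., the number of AdaBoost rounds required to achieve loss at most L* is at least the ℓ₁-norm of the smallest combination achieving that loss, divided by 2·ln m. -/

import Mathlib

/-!
Along the run the loss never exceeds `L(0) = 1`, so `S = ∑ᵢ exp(-(Mλ)ᵢ) ≤ m`. The complementary rows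
have margins `±a`, whose terms `e^{∓a}` of `S` multiply to `1`; hence both rows carry AdaBoost weight at
least `1/S² ≥ 1/m²`. As they take opposite values in every column, they cancel in each correlation, so
`|r_t| ≤ 1 - 2/m²` and the step `α_t = ½ ln((1+r_t)/(1−r_t))` has `|α_t| ≤ ln m`. Each round moves one
coordinate by `α_t`, so `‖λ^T‖₁ ≤ T ln m`, and `λ^T` is a competitor in the infimum.
-/

/-- The exponential loss `L(λ) = (1/m) ∑ᵢ exp(−(Mλ)ᵢ)`. -/
noncomputable def expLoss {m N : ℕ} (M : Matrix (Fin m) (Fin N) ℝ) (lam : Fin N → ℝ) : ℝ :=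
  (1 / (m : ℝ)) * ∑ i, Real.exp (-(M.mulVec lam i))

/-- AdaBoost's distribution `D(i) ∝ exp(−(Mλ)ᵢ)`. -/
noncomputable def wt {m N : ℕ} (M : Matrix (Fin m) (Fin N) ℝ) (lam : Fin N → ℝ) (i : Fin m) : ℝ :=
  Real.exp (-(M.mulVec lam i)) / ∑ i', Real.exp (-(M.mulVec lam i'))

/-- The ℓ₁-norm on `ℝ^N`. -/
noncomputable def l1 {N : ℕ} (v : Fin N → ℝ) : ℝ := ∑ j, |v j|

/-- `lam`, `j`, `r` describe a run of AdaBoost on feature matrix `M`: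
`lam 0 = 0`, and at each round the coordinate `j t` of maximal absolute correlation is
chosen, `r t` is its correlation, and the step is `α_t = ½ ln((1+r_t)/(1−r_t))`. -/
def IsAdaBoost {m N : ℕ} (M : Matrix (Fin m) (Fin N) ℝ)
    (lam : ℕ → Fin N → ℝ) (j : ℕ → Fin N) (r : ℕ → ℝ) : Prop :=
  lam 0 = 0 ∧
  ∀ t : ℕ,
    (∀ j' : Fin N, |∑ i, wt M (lam t) i * M i j'| ≤ |∑ i, wt M (lam t) i * M i (j t)|) ∧
    r t = ∑ i, wt M (lam t) i * M i (j t) ∧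
    lam (t + 1) = lam t + Pi.single (j t) ((1 / 2) * Real.log ((1 + r t) / (1 - r t)))

lemma l1_nonneg {N : ℕ} (v : Fin N → ℝ) : 0 ≤ l1 v :=
  Finset.sum_nonneg fun _ _ => abs_nonneg _

lemma l1_add_single_le {N : ℕ} (v : Fin N → ℝ) (k : Fin N) (a : ℝ) :
    l1 (v + Pi.single k a) ≤ l1 v + |a| := by
  calc l1 (v + Pi.single k a) ≤ l1 v + ∑ j, |(Pi.single k a : Fin N → ℝ) j| := by
        rw [l1, l1, ← Finset.sum_add_distrib]
        exact Finset.sum_le_sum fun j _ => abs_add_le _ _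
    _ = l1 v + |a| := by
        rw [Finset.sum_eq_single k (fun j _ hj => by simp [hj]) (by simp)]
        simp

section Distribution

variable {ι : Type*} [Fintype ι] [DecidableEq ι]

/-- Subtracting `δ` from the two weights on `i₀, i₁` leaves the sum unchanged, since `c i₀ + c i₁ = 0`,
and a sub-probability vector of mass `1 - 2δ`. -/
lemma abs_sum_mul_le_one_sub_two_mul {D c : ι → ℝ} {i₀ i₁ : ι} {δ : ℝ} (hne : i₀ ≠ i₁)
    (hD : ∀ i, 0 ≤ D i) (hD₁ : ∑ i, D i = 1) (hc : ∀ i, |c i| ≤ 1) (hanti : c i₁ = -c i₀)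
    (h₀ : δ ≤ D i₀) (h₁ : δ ≤ D i₁) :
    |∑ i, D i * c i| ≤ 1 - 2 * δ := by
  set D' : ι → ℝ := D - Pi.single i₀ δ - Pi.single i₁ δ
  have hD' : ∀ i, 0 ≤ D' i := by
    intro i
    by_cases hi₀ : i = i₀
    · subst hi₀; simp [D', hne, h₀]
    by_cases hi₁ : i = i₁
    · subst hi₁; simp [D', Ne.symm hne, h₁]
    · simp [D', hi₀, hi₁, hD i]
  have hsum : ∑ i, D i * c i = ∑ i, D' i * c i := by
    simp [D', sub_mul, Finset.sum_sub_distrib, ← Pi.single_mul_left_apply, hanti]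
  have hmass : ∑ i, D' i = 1 - 2 * δ := by
    simp [D', Finset.sum_sub_distrib, hD₁]; ring
  calc |∑ i, D i * c i| ≤ ∑ i, |D' i * c i| := hsum ▸ Finset.abs_sum_le_sum_abs _ _
    _ ≤ ∑ i, D' i := Finset.sum_le_sum fun i _ => by
        rw [abs_mul, abs_of_nonneg (hD' i)]; exact mul_le_of_le_one_right (hD' i) (hc i)
    _ = 1 - 2 * δ := hmass

end Distribution

section Weights

variable {m N : ℕ} (M : Matrix (Fin m) (Fin N) ℝ) (lam : Fin N → ℝ)

lemma sum_exp_neg_mulVec_pos [NeZero m] : 0 < ∑ i, Real.exp (-(M.mulVec lam i)) :=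
  Finset.sum_pos (fun _ _ => Real.exp_pos _) Finset.univ_nonempty

lemma wt_nonneg (i : Fin m) : 0 ≤ wt M lam i :=
  div_nonneg (Real.exp_pos _).le (Finset.sum_nonneg fun _ _ => (Real.exp_pos _).le)

lemma sum_wt [NeZero m] : ∑ i, wt M lam i = 1 := by
  simp only [wt, ← Finset.sum_div]
  exact div_self (sum_exp_neg_mulVec_pos M lam).ne'

lemma expLoss_zero [NeZero m] : expLoss M 0 = 1 := by
  simp [expLoss]

lemma mulVec_apply_eq_neg {i₀ i₁ : Fin m} (hcomp : ∀ j, M i₁ j = -M i₀ j) :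
    M.mulVec lam i₁ = -M.mulVec lam i₀ := by
  simp [Matrix.mulVec, dotProduct, hcomp, ← Finset.sum_neg_distrib]

lemma inv_sq_le_wt {i₀ i₁ : Fin m} (hne : i₀ ≠ i₁) (hanti : M.mulVec lam i₁ = -M.mulVec lam i₀)
    (hloss : expLoss M lam ≤ 1) : ((m : ℝ)⁻¹) ^ 2 ≤ wt M lam i₀ := by
  have : NeZero m := ⟨i₀.pos.ne'⟩
  set S := ∑ i, Real.exp (-(M.mulVec lam i))
  have hS : 0 < S := sum_exp_neg_mulVec_pos M lam
  have hSm : S ≤ m := by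
    rwa [expLoss, one_div, inv_mul_le_iff₀ (Nat.cast_pos.mpr i₀.pos), mul_one] at hloss
  have hpair : 1 ≤ Real.exp (-M.mulVec lam i₀) * S := by
    have h := Finset.sum_le_sum_of_subset_of_nonneg (Finset.subset_univ {i₀, i₁})
      (fun i _ _ => (Real.exp_pos (-(M.mulVec lam i))).le)
    rw [Finset.sum_pair hne, hanti, neg_neg] at h
    calc (1 : ℝ) = Real.exp (-M.mulVec lam i₀) * Real.exp (M.mulVec lam i₀) := by
          rw [← Real.exp_add]; simp
      _ ≤ Real.exp (-M.mulVec lam i₀) * S := by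
          gcongr; linarith [Real.exp_pos (-M.mulVec lam i₀)]
  calc ((m : ℝ)⁻¹) ^ 2 ≤ (S⁻¹) ^ 2 := by gcongr
    _ ≤ wt M lam i₀ := by
      rw [wt, sq, le_div_iff₀ hS, inv_mul_cancel_right₀ hS.ne', inv_le_iff_one_le_mul₀ hS]
      linarith

end Weights

lemma log_one_add_div_one_sub_le {r δ : ℝ} (hδ : 0 < δ) (hr : |r| ≤ 1 - 2 * δ) :
    Real.log ((1 + r) / (1 - r)) ≤ Real.log δ⁻¹ := by
  obtain ⟨hlo, hhi⟩ := abs_le.mp hr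
  apply Real.log_le_log (div_pos (by linarith) (by linarith))
  rw [div_le_iff₀ (by linarith), inv_mul_eq_div, le_div_iff₀ hδ]
  nlinarith

lemma abs_log_one_add_div_one_sub_le {r δ : ℝ} (hδ : 0 < δ) (hr : |r| ≤ 1 - 2 * δ) :
    |Real.log ((1 + r) / (1 - r))| ≤ Real.log δ⁻¹ := by
  refine abs_le'.mpr ⟨log_one_add_div_one_sub_le hδ hr, ?_⟩
  rw [← Real.log_inv, inv_div, sub_eq_add_neg, ← sub_neg_eq_add 1 r]
  exact log_one_add_div_one_sub_le hδ (by rwa [abs_neg])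

lemma abs_half_log_correlation_le {m N : ℕ} {M : Matrix (Fin m) (Fin N) ℝ} (hM : ∀ i j, |M i j| ≤ 1)
    {i₀ i₁ : Fin m} (hne : i₀ ≠ i₁) (hcomp : ∀ j, M i₁ j = -M i₀ j) {lam : Fin N → ℝ}
    (hloss : expLoss M lam ≤ 1) (k : Fin N) :
    |(1 / 2) * Real.log ((1 + ∑ i, wt M lam i * M i k) / (1 - ∑ i, wt M lam i * M i k))|
      ≤ Real.log m := by
  have : NeZero m := ⟨i₀.pos.ne'⟩
  have hanti := mulVec_apply_eq_neg M lam hcomp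
  have hcorr : |∑ i, wt M lam i * M i k| ≤ 1 - 2 * ((m : ℝ)⁻¹) ^ 2 :=
    abs_sum_mul_le_one_sub_two_mul hne (wt_nonneg M lam) (sum_wt M lam) (hM · k) (hcomp k)
      (inv_sq_le_wt M lam hne hanti hloss)
      (inv_sq_le_wt M lam hne.symm (by rw [hanti, neg_neg]) hloss)
  have hm : (0 : ℝ) < m := Nat.cast_pos.mpr i₀.pos
  have hlog := abs_log_one_add_div_one_sub_le (by positivity) hcorr
  rw [inv_pow, inv_inv, Real.log_pow] at hlog
  rw [abs_mul, abs_of_pos one_half_pos]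
  push_cast at hlog
  linarith

namespace IsAdaBoost

variable {m N : ℕ} {M : Matrix (Fin m) (Fin N) ℝ} {lam : ℕ → Fin N → ℝ} {j : ℕ → Fin N}
  {r : ℕ → ℝ}

lemma expLoss_le_one [NeZero m] (hAda : IsAdaBoost M lam j r)
    (hmono : ∀ t, expLoss M (lam (t + 1)) ≤ expLoss M (lam t)) (t : ℕ) :
    expLoss M (lam t) ≤ 1 := by
  induction t with
  | zero => rw [hAda.1, expLoss_zero]
  | succ t ih => exact (hmono t).trans ih

lemma l1_le (hAda : IsAdaBoost M lam j r) (hM : ∀ i j, |M i j| ≤ 1) {i₀ i₁ : Fin m}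
    (hne : i₀ ≠ i₁) (hcomp : ∀ j, M i₁ j = -M i₀ j) (hloss : ∀ t, expLoss M (lam t) ≤ 1)
    (t : ℕ) : l1 (lam t) ≤ t * Real.log m := by
  induction t with
  | zero => simp [hAda.1, l1]
  | succ t ih =>
    obtain ⟨-, hr, hstep⟩ := hAda.2 t
    have hα := abs_half_log_correlation_le hM hne hcomp (hloss t) (j t)
    rw [← hr] at hα
    calc l1 (lam (t + 1)) ≤ l1 (lam t) + Real.log m := by
          rw [hstep]; exact (l1_add_single_le _ _ _).trans (by gcongr)
      _ ≤ (t + 1 : ℕ) * Real.log m := by push_cast; linarith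

end IsAdaBoost

theorem adaboost_round_lower_bound_norm_general {m N : ℕ} (hm : 2 ≤ m)
    (M : Matrix (Fin m) (Fin N) ℝ) (hM : ∀ i j, |M i j| ≤ 1)
    (i₀ i₁ : Fin m) (hne : i₀ ≠ i₁)
    (hcomp : ∀ jj : Fin N, M i₁ jj = -M i₀ jj)
    (lam : ℕ → Fin N → ℝ) (j : ℕ → Fin N) (r : ℕ → ℝ)
    (hAda : IsAdaBoost M lam j r)
    (hmono : ∀ t : ℕ, expLoss M (lam (t + 1)) ≤ expLoss M (lam t))
    (Lstar : ℝ) (T : ℕ) (hT : expLoss M (lam T) ≤ Lstar) :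
    sInf {x : ℝ | ∃ lam' : Fin N → ℝ, expLoss M lam' ≤ Lstar ∧ x = l1 lam'} /
      (2 * Real.log m) ≤ (T : ℝ) := by
  have : NeZero m := ⟨by omega⟩
  have hlog : 0 < Real.log m := Real.log_pos (by exact_mod_cast hm)
  have hnorm : l1 (lam T) ≤ T * Real.log m :=
    hAda.l1_le hM hne hcomp (hAda.expLoss_le_one hmono) T
  have hinf : sInf {x : ℝ | ∃ lam' : Fin N → ℝ, expLoss M lam' ≤ Lstar ∧ x = l1 lam'}
      ≤ l1 (lam T) :=
    csInf_le ⟨0, by rintro _ ⟨v, -, rfl⟩; exact l1_nonneg v⟩ ⟨lam T, hT, rfl⟩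
  rw [div_le_iff₀ (by positivity)]
  nlinarith [(Nat.cast_nonneg T : (0 : ℝ) ≤ T)]

/-- If the feature matrix has two complementary `{−1,+1}`-valued rows, then the
number of AdaBoost rounds needed to reach loss at most `L*` is at least
`inf{‖λ‖₁ : L(λ) ≤ L*}/(2 ln m)`. -/
theorem adaboost_round_lower_bound_norm {m N : ℕ} (hm : 2 ≤ m)
    (M : Matrix (Fin m) (Fin N) ℝ) (hM : ∀ i j, |M i j| ≤ 1)
    (i₀ i₁ : Fin m) (hne : i₀ ≠ i₁)
    (hpm : ∀ jj : Fin N, M i₀ jj = 1 ∨ M i₀ jj = -1)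
    (hcomp : ∀ jj : Fin N, M i₁ jj = -M i₀ jj)
    (lam : ℕ → Fin N → ℝ) (j : ℕ → Fin N) (r : ℕ → ℝ)
    (hAda : IsAdaBoost M lam j r)
    (hmono : ∀ t : ℕ, expLoss M (lam (t + 1)) ≤ expLoss M (lam t))
    (Lstar : ℝ) (T : ℕ) (hT : expLoss M (lam T) ≤ Lstar) :
    sInf {x : ℝ | ∃ lam' : Fin N → ℝ, expLoss M lam' ≤ Lstar ∧ x = l1 lam'} /
      (2 * Real.log m) ≤ (T : ℝ) :=
  adaboost_round_lower_bound_norm_general hm M hM i₀ i₁ hne hcomp lam j r hAda hmono Lstar T hT
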